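/- If the series sum_{i=1}^∞ a_i diverges, then F is (a, r)-completable for some r ∈ ℕ. -/

import Mathlib

open scoped BigOperators

noncomputable def frameOp {n p : ℕ} (f : Fin p → EuclideanSpace ℂ (Fin n)) :
    EuclideanSpace ℂ (Fin n) →L[ℂ] EuclideanSpace ℂ (Fin n) :=
  ∑ i, (innerSL ℂ (f i)).smulRight (f i)

def HasEigenvalues {n : ℕ} (S : EuclideanSpace ℂ (Fin n) →L[ℂ] EuclideanSpace ℂ (Fin n))
    (Λ : Fin n → ℝ) : Prop :=
  Antitone Λ ∧ ∃ e : OrthonormalBasis (Fin n) ℂ (EuclideanSpace ℂ (Fin n)),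
    ∀ i, S (e i) = (Λ i : ℂ) • e i

noncomputable def tailSum {n : ℕ} (hn : 0 < n) (Λ : Fin n → ℝ) (k : ℕ) : ℝ :=
  ∑ i ∈ Finset.range k, Λ ⟨n - 1 - i, by omega⟩

def Completable {n p : ℕ} (f : Fin p → EuclideanSpace ℂ (Fin n)) (a : ℕ → ℝ) (r : ℕ) : Prop :=
  ∃ (c : ℝ) (g : Fin r → EuclideanSpace ℂ (Fin n)), 0 < c ∧
    (∀ i : Fin r, ‖g i‖ ^ 2 = a (i : ℕ)) ∧
    frameOp f + frameOp g = (c : ℂ) • ContinuousLinearMap.id ℂ (EuclideanSpace ℂ (Fin n))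

noncomputable def cseq {n : ℕ} (hn : 0 < n) (Λ : Fin n → ℝ) (a : ℕ → ℝ) : ℕ → ℝ
  | 0 => Λ ⟨0, hn⟩
  | k + 1 => max (cseq hn Λ a k)
      ((1 / (k + 1 : ℝ)) * (∑ i ∈ Finset.range (k + 1), a i + tailSum hn Λ (k + 1)))

def IsBessel {n : ℕ} (g : ℕ → EuclideanSpace ℂ (Fin n)) : Prop :=
  ∃ b > 0, ∀ x : EuclideanSpace ℂ (Fin n),
    Summable (fun i => ‖(inner ℂ (g i) x : ℂ)‖ ^ 2) ∧
    ∑' i, ‖(inner ℂ (g i) x : ℂ)‖ ^ 2 ≤ b * ‖x‖ ^ 2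

def CompletableInf {n p : ℕ} (f : Fin p → EuclideanSpace ℂ (Fin n)) (a : ℕ → ℝ) : Prop :=
  ∃ (c : ℝ) (g : ℕ → EuclideanSpace ℂ (Fin n)), 0 < c ∧ IsBessel g ∧
    (∀ i, ‖g i‖ ^ 2 = a i) ∧
    ∀ x, frameOp f x + ∑' i, (inner ℂ (g i) x : ℂ) • g i = (c : ℂ) • x


/-!
Write `S_F` in an orthonormal eigenbasis with eigenvalues `Λ`. Since `∑ aᵢ` diverges, we may take
`r` so large that `c = (∑_{i<r} aᵢ + ∑ Λ) / n` exceeds every `Λ k` by at least `2 a₀`; it remains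
to find `gᵢ` with `‖gᵢ‖² = aᵢ` whose frame operator is `diag (c - Λ)` in that basis. This is
built greedily: the first diagonal entry `t₀` is filled by the shortest run of consecutive `aᵢ`
whose sum reaches it, overshooting by some `y ≤ a_s`; that run is realized by real vectors in the
first two coordinates with frame operator `diag (t₀, y)`, and the remaining `aᵢ` realize, by
induction, the other entries with `t₁` lowered by `y`. A run realizes `diag (x, y)` through
`vᵢ = (Re ζᵢ, Im ζᵢ)` with `|ζᵢ|² = bᵢ` and `∑ ζᵢ² = x - y`, i.e. by closing a planar polygon
with sides `bᵢ` and `|x - y|`, which is possible because no side exceeds half the perimeter.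
-/

open Finset Matrix Filter

theorem exists_norm_eq_norm_sub_eq {E : Type*} [NormedAddCommGroup E] [NormedSpace ℝ E]
    (hE : 1 < Module.rank ℝ E) (w : E) {ρ R : ℝ} (hρ : 0 ≤ ρ) (h₁ : |‖w‖ - ρ| ≤ R)
    (h₂ : R ≤ ‖w‖ + ρ) : ∃ ζ, ‖ζ‖ = ρ ∧ ‖w - ζ‖ = R := by
  have : Nontrivial E := rank_pos_iff_nontrivial.mp (zero_lt_one.trans hE)
  obtain ⟨u, hu, hwu⟩ : ∃ u : E, ‖u‖ = 1 ∧ w = ‖w‖ • u := by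
    rcases eq_or_ne w 0 with rfl | hw
    · obtain ⟨u, hu⟩ := exists_norm_eq E zero_le_one
      exact ⟨u, hu, by simp⟩
    · exact ⟨‖w‖⁻¹ • w, norm_smul_inv_norm hw, by simp [smul_smul, hw]⟩
  have hmem : ∀ σ : ℝ, |σ| = 1 → σ • ρ • u ∈ Metric.sphere (0 : E) ρ := fun σ hσ => by
    simp [norm_smul, hu, hσ, abs_of_nonneg hρ]
  have hdist : ∀ σ : ℝ, ‖w - σ • ρ • u‖ = |‖w‖ - σ * ρ| := fun σ => by
    conv_lhs => rw [hwu]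
    rw [smul_smul, ← sub_smul, norm_smul, hu, mul_one, Real.norm_eq_abs]
  obtain ⟨ζ, hζ, hζR⟩ := (isConnected_sphere hE 0 hρ).isPreconnected.intermediate_value
    (hmem 1 abs_one) (hmem (-1) (by simp)) (f := fun ζ => ‖w - ζ‖)
    (by fun_prop) ⟨by simpa only [hdist, one_mul] using h₁, by
      simpa only [hdist, neg_one_mul, sub_neg_eq_add,
        abs_of_nonneg (add_nonneg (norm_nonneg w) hρ)] using h₂⟩
  exact ⟨ζ, by simpa using hζ, hζR⟩

theorem exists_norm_eq_sum_eq {E ι : Type*} [NormedAddCommGroup E] [NormedSpace ℝ E]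
    (hE : 1 < Module.rank ℝ E) (s : Finset ι) {b : ι → ℝ} (hb : ∀ i ∈ s, 0 ≤ b i) (w : E)
    (hw : ‖w‖ ≤ ∑ i ∈ s, b i) (hmax : ∀ i ∈ s, 2 * b i ≤ ∑ j ∈ s, b j + ‖w‖) :
    ∃ z : ι → E, (∀ i ∈ s, ‖z i‖ = b i) ∧ ∑ i ∈ s, z i = w := by
  classical
  induction s using Finset.induction_on generalizing w with
  | empty => exact ⟨0, by simp, (norm_le_zero_iff.1 (by simpa using hw)).symm⟩
  | insert a s ha ih =>
    simp only [sum_insert ha, forall_mem_insert] at hb hw hmax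
    set S := ∑ j ∈ s, b j
    have hS : ∀ i ∈ s, b i ≤ S := fun i hi => single_le_sum hb.2 hi
    -- the longest admissible gap `‖w - ζ‖` keeps the polygon inequalities for `s`
    obtain ⟨ζ, hζ, hwζ⟩ := exists_norm_eq_norm_sub_eq hE w hb.1 (R := min (‖w‖ + b a) S)
      (le_min (abs_sub_le_iff.2 ⟨by linarith, by linarith [norm_nonneg w]⟩)
        (abs_sub_le_iff.2 ⟨by linarith, by linarith⟩))
      (min_le_left _ _)
    obtain ⟨z, hz, hzw⟩ := ih hb.2 (w - ζ) (hwζ ▸ min_le_right _ _) fun i hi => by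
      rw [hwζ]
      rcases min_choice (‖w‖ + b a) S with h | h <;> rw [h] <;> linarith [hmax.2 i hi, hS i hi]
    refine ⟨Function.update z a ζ, ?_, ?_⟩
    · simp only [forall_mem_insert, Function.update_self, hζ, true_and]
      exact fun i hi => by rw [Function.update_of_ne (ne_of_mem_of_not_mem hi ha), hz i hi]
    · rw [sum_insert ha, Function.update_self, sum_congr rfl fun i hi =>
        Function.update_of_ne (ne_of_mem_of_not_mem hi ha) ζ z, hzw, add_sub_cancel]

theorem exists_norm_sq_eq_sum_sq_eq {ι : Type*} (s : Finset ι) {b : ι → ℝ}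
    (hb : ∀ i ∈ s, 0 ≤ b i) (w : ℂ) (hw : ‖w‖ ≤ ∑ i ∈ s, b i)
    (hmax : ∀ i ∈ s, 2 * b i ≤ ∑ j ∈ s, b j + ‖w‖) :
    ∃ ζ : ι → ℂ, (∀ i ∈ s, ‖ζ i‖ ^ 2 = b i) ∧ ∑ i ∈ s, ζ i ^ 2 = w := by
  obtain ⟨z, hz, hzw⟩ := exists_norm_eq_sum_eq (by simp [Complex.rank_real_complex]) s hb w hw hmax
  choose ζ hζ using fun i => IsAlgClosed.exists_pow_nat_eq (z i) two_pos
  exact ⟨ζ, fun i hi => by rw [← norm_pow, hζ, hz i hi], by simp only [hζ, hzw]⟩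

def DiagRealizable {m : ℕ} (b : ℕ → ℝ) (I : Finset ℕ) (t : Fin m → ℝ) : Prop :=
  ∃ v : ℕ → Fin m → ℝ, (∀ i ∈ I, v i ⬝ᵥ v i = b i) ∧
    ∑ i ∈ I, vecMulVec (v i) (v i) = diagonal t

namespace DiagRealizable

variable {m : ℕ} {b : ℕ → ℝ} {I J : Finset ℕ}

theorem union {t₁ t₂ : Fin m → ℝ} (h₁ : DiagRealizable b I t₁) (h₂ : DiagRealizable b J t₂)
    (hIJ : Disjoint I J) : DiagRealizable b (I ∪ J) (t₁ + t₂) := by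
  classical
  obtain ⟨v₁, hv₁, hsum₁⟩ := h₁
  obtain ⟨v₂, hv₂, hsum₂⟩ := h₂
  have hv₂' : ∀ i ∈ J, i ∉ I := fun i hi hi' => disjoint_left.1 hIJ hi' hi
  refine ⟨fun i => if i ∈ I then v₁ i else v₂ i, fun i hi => ?_, ?_⟩
  · rcases mem_union.1 hi with hi | hi
    · simp [hi, hv₁ i hi]
    · simp [hv₂' i hi, hv₂ i hi]
  · rw [sum_union hIJ, show diagonal (t₁ + t₂) = diagonal t₁ + diagonal t₂ from
      (diagonal_add _ _).symm, ← hsum₁, ← hsum₂]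
    congr 1 <;> refine sum_congr rfl fun i hi => ?_
    · simp [hi]
    · simp [hv₂' i hi]

theorem vecCons_zero {t : Fin m → ℝ} (h : DiagRealizable b I t) :
    DiagRealizable b I (vecCons 0 t) := by
  obtain ⟨v, hv, hsum⟩ := h
  refine ⟨fun i => vecCons 0 (v i), fun i hi => by simp [hv i hi], ?_⟩
  ext k l
  refine Fin.cases ?_ (fun k => ?_) k <;> refine Fin.cases ?_ (fun l => ?_) l <;>
    simp [Matrix.sum_apply, diagonal_apply, Fin.succ_ne_zero]
  simpa [Matrix.sum_apply, diagonal_apply, vecMulVec_apply] using congrFun₂ hsum k l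

end DiagRealizable

theorem diagRealizable_fin_one {b : ℕ → ℝ} {I : Finset ℕ} (hb : ∀ i ∈ I, 0 ≤ b i) :
    DiagRealizable b I ![∑ i ∈ I, b i] := by
  refine ⟨fun i => ![√(b i)], fun i hi => by simp [Real.mul_self_sqrt (hb i hi)], ?_⟩
  ext k l
  fin_cases k; fin_cases l
  simpa [Matrix.sum_apply] using sum_congr rfl fun i hi => Real.mul_self_sqrt (hb i hi)

theorem diagRealizable_vecCons_single {m : ℕ} {b : ℕ → ℝ} {I : Finset ℕ}
    (hb : ∀ i ∈ I, 0 ≤ b i) {x y : ℝ} (hx : 0 ≤ x) (hy : 0 ≤ y) (hsum : ∑ i ∈ I, b i = x + y)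
    (hmax : ∀ i ∈ I, b i ≤ max x y) :
    DiagRealizable b I (vecCons x (Pi.single 0 y) : Fin (m + 2) → ℝ) := by
  have habs : ‖((x - y : ℝ) : ℂ)‖ = |x - y| := Complex.norm_real _
  obtain ⟨ζ, hζ, hζsum⟩ := exists_norm_sq_eq_sum_sq_eq I hb ((x - y : ℝ) : ℂ)
    (by rw [habs, hsum, abs_sub_le_iff]; constructor <;> linarith)
    (fun i hi => by
      rw [habs, hsum]
      rcases le_total x y with h | h
      · linarith [abs_of_nonpos (sub_nonpos.2 h), max_eq_right h ▸ hmax i hi]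
      · linarith [abs_of_nonneg (sub_nonneg.2 h), max_eq_left h ▸ hmax i hi])
  have hnorm : ∀ i ∈ I, (ζ i).re * (ζ i).re + (ζ i).im * (ζ i).im = b i := fun i hi => by
    rw [← Complex.normSq_apply, ← Complex.sq_norm, hζ i hi]
  have hxx_yy : ∑ i ∈ I, (ζ i).re * (ζ i).re - ∑ i ∈ I, (ζ i).im * (ζ i).im = x - y := by
    simpa [← sum_sub_distrib, Complex.re_sum, sq] using congrArg Complex.re hζsum
  have hxx_add_yy : ∑ i ∈ I, (ζ i).re * (ζ i).re + ∑ i ∈ I, (ζ i).im * (ζ i).im = x + y := by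
    rw [← sum_add_distrib, ← hsum]; exact sum_congr rfl hnorm
  have hxy : ∑ i ∈ I, (ζ i).re * (ζ i).im = 0 := by
    have := congrArg Complex.im hζsum
    simp only [Complex.im_sum, sq, Complex.mul_im, Complex.ofReal_im, mul_comm (ζ _).im,
      ← two_mul, ← mul_sum] at this
    simpa using this
  refine ⟨fun i => vecCons (ζ i).re (Pi.single 0 (ζ i).im), fun i hi => ?_, ?_⟩
  · simpa [cons_dotProduct] using hnorm i hi
  · ext k l
    refine Fin.cases ?_ (fun k => ?_) k <;> refine Fin.cases ?_ (fun l => ?_) l <;>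
      simp [Matrix.sum_apply, diagonal_apply, Pi.single_apply, (Fin.succ_ne_zero _).symm]
    · linarith
    · simp [hxy]
    · simp [mul_comm, hxy]
    · rcases eq_or_ne k 0 with rfl | hk
      · rcases eq_or_ne l 0 with rfl | hl
        · simp only [↓reduceIte, Pi.smul_apply, Pi.single_eq_same, smul_eq_mul]
          linarith
        · simp [hl, Ne.symm hl]
      · simp [hk]

theorem exists_sum_Ico_mem_Icc {b : ℕ → ℝ} (hb : Antitone b) {s r : ℕ} {T : ℝ} (hT : 0 < T)
    (hTr : T ≤ ∑ i ∈ Ico s r, b i) :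
    ∃ β, s < β ∧ β ≤ r ∧ T ≤ ∑ i ∈ Ico s β, b i ∧ ∑ i ∈ Ico s β, b i ≤ T + b s := by
  classical
  have hex : ∃ β, T ≤ ∑ i ∈ Ico s β, b i := ⟨r, hTr⟩
  set β := Nat.find hex
  have hsβ : s < β := by
    by_contra! h
    have := Nat.find_spec hex
    rw [Ico_eq_empty_of_le h, sum_empty] at this
    linarith
  have hmin : ∑ i ∈ Ico s (β - 1), b i < T := not_le.1 (Nat.find_min hex (by omega))
  refine ⟨β, hsβ, Nat.find_min' hex hTr, Nat.find_spec hex, ?_⟩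
  rw [← Nat.sub_add_cancel (Nat.one_le_of_lt hsβ), sum_Ico_succ_top (by omega)]
  linarith [hb (show s ≤ β - 1 by omega)]

theorem diagRealizable_Ico {b : ℕ → ℝ} (hb : Antitone b) (hpos : ∀ i, 0 < b i) {m s r : ℕ}
    {t : Fin (m + 1) → ℝ} (hsum : ∑ i ∈ Ico s r, b i = ∑ k, t k) (h₀ : b s ≤ t 0)
    (h : ∀ k ≠ 0, 2 * b s ≤ t k) : DiagRealizable b (Ico s r) t := by
  induction m generalizing s with
  | zero =>
    convert diagRealizable_fin_one fun i _ => (hpos i).le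
    ext k
    simp [Fin.fin_one_eq_zero k, hsum]
  | succ m ih =>
    have htail : ∀ k : Fin (m + 1), 2 * b s ≤ t k.succ := fun k => h _ (Fin.succ_ne_zero k)
    rw [Fin.sum_univ_succ] at hsum
    obtain ⟨β, hsβ, hβr, hβ₁, hβ₂⟩ := exists_sum_Ico_mem_Icc hb ((hpos s).trans_le h₀)
      (T := t 0) (by linarith [sum_nonneg fun k (_ : k ∈ univ) =>
        (mul_nonneg zero_le_two (hpos s).le).trans (htail k)])
    set y := ∑ i ∈ Ico s β, b i - t 0 with hy
    have hblock :
        DiagRealizable b (Ico s β) (vecCons (t 0) (Pi.single 0 y) : Fin (m + 2) → ℝ) :=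
      diagRealizable_vecCons_single (fun i _ => (hpos i).le) (by linarith [hpos s]) (by linarith)
        (by ring) fun i hi => le_max_of_le_left ((hb (mem_Ico.1 hi).1).trans h₀)
    have hrest : DiagRealizable b (Ico β r) (vecTail t - Pi.single 0 y) := by
      refine ih ?_ ?_ fun k hk => ?_
      · have := sum_Ico_consecutive b hsβ.le hβr
        simp only [Pi.sub_apply, sum_sub_distrib, sum_pi_single', mem_univ, if_true, vecTail,
          Function.comp_apply]
        linarith
      · simp only [Pi.sub_apply, Pi.single_eq_same, vecTail, Function.comp_apply]
        linarith [htail 0, hb hsβ.le]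
      · simp only [Pi.sub_apply, Pi.single_eq_of_ne hk, sub_zero, vecTail, Function.comp_apply]
        linarith [htail k, hb hsβ.le]
    convert hblock.union hrest.vecCons_zero (Ico_disjoint_Ico_consecutive s β r) using 1
    · exact (Ico_union_Ico_eq_Ico hsβ.le hβr).symm
    · ext k
      refine Fin.cases ?_ (fun k => ?_) k <;> simp [vecTail]

theorem frameOp_apply {n p : ℕ} (f : Fin p → EuclideanSpace ℂ (Fin n))
    (x : EuclideanSpace ℂ (Fin n)) :
    frameOp f x = ∑ i, inner ℂ (f i) x • f i := by
  simp [frameOp]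

theorem isSymmetric_frameOp {n p : ℕ} (f : Fin p → EuclideanSpace ℂ (Fin n)) :
    (frameOp f : EuclideanSpace ℂ (Fin n) →ₗ[ℂ] EuclideanSpace ℂ (Fin n)).IsSymmetric :=
  fun x y => by
  simp [frameOp_apply, sum_inner, inner_sum, inner_smul_left, inner_smul_right, mul_comm]

theorem DiagRealizable.exists_frameOp_apply_eq {n r : ℕ} {b : ℕ → ℝ} {t : Fin n → ℝ}
    (h : DiagRealizable b (range r) t)
    (e : OrthonormalBasis (Fin n) ℂ (EuclideanSpace ℂ (Fin n))) :
    ∃ g : Fin r → EuclideanSpace ℂ (Fin n),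
      (∀ i, ‖g i‖ ^ 2 = b i) ∧ ∀ l, frameOp g (e l) = (t l : ℂ) • e l := by
  obtain ⟨v, hv, hsum⟩ := h
  refine ⟨fun i => e.repr.symm (WithLp.toLp 2 fun k => (v i k : ℂ)), fun i => ?_, fun l => ?_⟩
  · rw [LinearIsometryEquiv.norm_map, EuclideanSpace.norm_sq_eq, ← hv i (mem_range.2 i.2)]
    simp [dotProduct, sq]
  · apply e.repr.injective
    simp only [frameOp_apply, map_sum, LinearIsometryEquiv.map_smul,
      LinearIsometryEquiv.apply_symm_apply, LinearIsometryEquiv.inner_map_eq_flip,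
      OrthonormalBasis.repr_self]
    ext k
    have := congrFun₂ hsum k l
    simp [Matrix.sum_apply, sum_range, diagonal_apply, vecMulVec_apply, PiLp.inner_apply] at this ⊢
    split_ifs at this ⊢ with hkl
    · subst hkl; exact_mod_cast this
    · exact_mod_cast (by simpa only [mul_comm] using this)

theorem divergent_implies_completable {n p : ℕ} (hn : 0 < n)
    (f : Fin p → EuclideanSpace ℂ (Fin n))
    (a : ℕ → ℝ) (ha : Antitone a) (hapos : ∀ i, 0 < a i)
    (hdiv : ¬ Summable a) :
    ∃ r : ℕ, Completable f a r := by
  obtain ⟨m, rfl⟩ := Nat.exists_eq_add_one_of_ne_zero hn.ne'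
  have hS := isSymmetric_frameOp f
  set e := hS.eigenvectorBasis finrank_euclideanSpace_fin
  set Λ := hS.eigenvalues finrank_euclideanSpace_fin
  set c : ℕ → ℝ := fun r => (∑ i ∈ range r, a i + ∑ k, Λ k) / (m + 1)
  have hc : Tendsto c atTop atTop :=
    (tendsto_atTop_add_const_right _ _ ((not_summable_iff_tendsto_nat_atTop_of_nonneg
      fun i => (hapos i).le).1 hdiv)).atTop_div_const (by positivity)
  obtain ⟨r, hc_pos, hcΛ⟩ := ((hc.eventually_gt_atTop 0).and
    (eventually_all.2 fun k => hc.eventually_ge_atTop (2 * a 0 + Λ k))).exists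
  have hreal : DiagRealizable a (range r) fun k => c r - Λ k := by
    rw [range_eq_Ico]
    refine diagRealizable_Ico ha hapos ?_ (by linarith [hcΛ 0, hapos 0])
      fun k _ => by linarith [hcΛ k]
    simp only [← range_eq_Ico, sum_sub_distrib, sum_const, card_univ, Fintype.card_fin,
      nsmul_eq_mul, Nat.cast_add, Nat.cast_one, c]
    field_simp
    ring
  obtain ⟨g, hg_norm, hg⟩ := hreal.exists_frameOp_apply_eq e
  refine ⟨r, c r, g, hc_pos, hg_norm, ContinuousLinearMap.coe_injective (e.toBasis.ext fun l => ?_)⟩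
  have hΛ : frameOp f (e l) = (Λ l : ℂ) • e l := hS.apply_eigenvectorBasis _ l
  simp only [OrthonormalBasis.coe_toBasis, ContinuousLinearMap.coe_coe, _root_.add_apply,
    _root_.smul_apply, ContinuousLinearMap.id_apply, hΛ, hg, ← add_smul, Complex.ofReal_sub,
    add_sub_cancel]
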